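/- arXiv:1802.00875 — 4 statements merged into one kernel-verified Lean document; each statement's English description precedes it below -/
import Mathlib

section
/- Let G ∈ F^{k×n} be the generator matrix of a linear code over a finite field F. Suppose I ⊆ [k] with |I| = r and J ⊆ [n] with |J| = r are such that for all x, y ∈ F^k, x|_I can be recovered from (xG)|_J (i.e., there is a function f : F^r → F^r with f((xG)|_J) = x|_I for all x). Then the submatrix G|_{[k]∖I, J} (rows outside I, columns in J) is the zero matrix. -/
/-!
Recoverability says that `x|_I` is a function of `(xG)|_J`, so the kernel of the linear map
`x ↦ (xG)|_J` lies in the kernel of the projection `x ↦ x|_I`. The projection is onto `F^r`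
while the first map lands in `F^r`, so rank–nullity gives `dim ker ≥ k - r` for the first map,
and the two kernels coincide. For `i ∉ I` the unit vector `e_i` is killed by the projection, hence
`(e_i G)|_J`, the `i`-th row of `G|_{·,J}`, vanishes.
-/

open Module

theorem LinearMap.ker_eq_of_ker_le_of_surjective {K V W U : Type*} [DivisionRing K]
    [AddCommGroup V] [Module K V] [AddCommGroup W] [Module K W] [AddCommGroup U] [Module K U]
    [FiniteDimensional K V] [FiniteDimensional K W]
    {L : V →ₗ[K] W} {P : V →ₗ[K] U} (hP : Function.Surjective P)
    (hdim : finrank K W ≤ finrank K U) (hker : ker L ≤ ker P) :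
    ker L = ker P := by
  refine Submodule.eq_of_le_of_finrank_le hker ?_
  have hL := L.finrank_range_add_finrank_ker
  have hPV := P.finrank_range_add_finrank_ker
  have hrangeL : finrank K (range L) ≤ finrank K W := Submodule.finrank_le _
  rw [range_eq_top.mpr hP, finrank_top] at hPV
  omega

theorem stmt_0_general {F : Type} [Field F] {k n r : ℕ}
    (G : Matrix (Fin k) (Fin n) F)
    (I : Finset (Fin k)) (J : Finset (Fin n))
    (hI : I.card = r) (hJ : J.card = r)
    (f : (↥J → F) → (↥I → F))
    (hf : ∀ x : Fin k → F,
      f (fun j => Matrix.vecMul x G j.1) = fun i => x i.1) :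
    ∀ i : Fin k, i ∉ I → ∀ j ∈ J, G i j = 0 := by
  intro i hi j hj
  set L := LinearMap.funLeft F F (Subtype.val : J → Fin n) ∘ₗ G.vecMulLinear
  set P := LinearMap.funLeft F F (Subtype.val : I → Fin k)
  have hfL : ∀ x, f (L x) = P x := hf
  have hker : LinearMap.ker L = LinearMap.ker P := by
    refine LinearMap.ker_eq_of_ker_le_of_surjective
      (LinearMap.funLeft_surjective_of_injective _ _ _ Subtype.val_injective)
      (by simp [hI, hJ]) fun x hx => ?_
    rw [LinearMap.mem_ker] at hx ⊢
    rw [← hfL, hx, ← L.map_zero, hfL, P.map_zero]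
  have hsingle : Pi.single i 1 ∈ LinearMap.ker P := by
    ext ⟨i', hi'⟩
    simp [P, LinearMap.funLeft, show i' ≠ i by rintro rfl; exact hi hi']
  have hrow := congrFun (hker ▸ hsingle : Pi.single i 1 ∈ LinearMap.ker L) ⟨j, hj⟩
  simpa [L, LinearMap.funLeft] using hrow

theorem stmt_0 {F : Type} [Field F] [Fintype F] {k n r : ℕ}
    (hr : 1 ≤ r) (hrk : r ≤ k) (hkn : k ≤ n)
    (G : Matrix (Fin k) (Fin n) F)
    (I : Finset (Fin k)) (J : Finset (Fin n))
    (hI : I.card = r) (hJ : J.card = r)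
    (f : (↥J → F) → (↥I → F))
    (hf : ∀ x : Fin k → F,
      f (fun j => Matrix.vecMul x G j.1) = fun i => x i.1) :
    ∀ i : Fin k, i ∉ I → ∀ j ∈ J, G i j = 0 :=
  stmt_0_general G I J hI hJ f hf
end

section
/- Let G ∈ F^{k×n} be a matrix over a finite field F, and let I ⊆ [k], J ⊆ [n] with |I| = |J| = r. If there is a function f : F^r → F^r with f((xG)|_J) = x|_I for all x ∈ F^k, then the r×r submatrix G|_{I,J} is invertible. -/
/-!
If `G|_{I,J}` were singular, a nonzero `v` with `v G|_{I,J} = 0`, extended by zero to `x ∈ F^k`,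
would satisfy `(xG)|_J = 0 = (0G)|_J` while `x|_I = v ≠ 0 = 0|_I`, so no `f` could recover `x|_I`.
-/

open Function Matrix

theorem Matrix.extend_zero_vecMul {m n ι R : Type*} [Fintype m] [Fintype ι]
    [NonUnitalNonAssocSemiring R] (G : Matrix m n R) {ρ : ι → m} (hρ : Injective ρ)
    (v : ι → R) :
    extend ρ v 0 ᵥ* G = v ᵥ* G.submatrix ρ id := by
  ext j
  refine (Fintype.sum_of_injective ρ hρ _ _ (fun i hi => ?_) (fun a => ?_)).symm
  · rw [extend_apply' _ _ _ fun ⟨a, ha⟩ => hi ⟨a, ha⟩, Pi.zero_apply, zero_mul]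
  · rw [hρ.extend_apply]; rfl

theorem Matrix.isUnit_submatrix_of_vecMul_eq_zero {m n ι R : Type*} [Fintype m] [Fintype ι]
    [DecidableEq ι] [Field R] (G : Matrix m n R) {ρ : ι → m} (hρ : Injective ρ) (κ : ι → n)
    (h : ∀ x : m → R, (∀ b, (x ᵥ* G) (κ b) = 0) → ∀ a, x (ρ a) = 0) :
    IsUnit (G.submatrix ρ κ) := by
  rw [isUnit_iff_isUnit_det, isUnit_iff_ne_zero]
  intro hdet
  obtain ⟨v, hv, hvG⟩ := exists_vecMul_eq_zero_iff.mpr hdet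
  have hx : ∀ b, (extend ρ v 0 ᵥ* G) (κ b) = 0 := fun b => by
    rw [extend_zero_vecMul G hρ]
    exact congrFun hvG b
  exact hv <| funext fun a => by simpa [hρ.extend_apply] using h _ hx a

theorem stmt_1_general {F : Type} [Field F] {k n r : ℕ}
    (G : Matrix (Fin k) (Fin n) F)
    (I : Finset (Fin k)) (J : Finset (Fin n))
    (hI : I.card = r) (hJ : J.card = r)
    (f : (↥J → F) → (↥I → F))
    (hf : ∀ x : Fin k → F,
      f (fun j => Matrix.vecMul x G j.1) = fun i => x i.1) :
    IsUnit (Matrix.of fun (a b : Fin r) =>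
      G (I.orderIsoOfFin hI a).1 (J.orderIsoOfFin hJ b).1) := by
  refine G.isUnit_submatrix_of_vecMul_eq_zero
    (Subtype.val_injective.comp (I.orderIsoOfFin hI).injective) _ fun x hx a => ?_
  have hxJ : (fun j : J => (x ᵥ* G) j.1) = fun j => ((0 : Fin k → F) ᵥ* G) j.1 := by
    funext j
    obtain ⟨b, rfl⟩ := (J.orderIsoOfFin hJ).surjective j
    rw [zero_vecMul]
    exact hx b
  have hx0 := congrFun (hf x) (I.orderIsoOfFin hI a)
  rw [hxJ, hf 0] at hx0
  exact hx0.symm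

theorem stmt_1 {F : Type} [Field F] [Fintype F] {k n r : ℕ}
    (hr : 1 ≤ r) (hrk : r ≤ k) (hkn : k ≤ n)
    (G : Matrix (Fin k) (Fin n) F)
    (I : Finset (Fin k)) (J : Finset (Fin n))
    (hI : I.card = r) (hJ : J.card = r)
    (f : (↥J → F) → (↥I → F))
    (hf : ∀ x : Fin k → F,
      f (fun j => Matrix.vecMul x G j.1) = fun i => x i.1) :
    IsUnit (Matrix.of fun (a b : Fin r) =>
      G (I.orderIsoOfFin hI a).1 (J.orderIsoOfFin hJ b).1) :=
  stmt_1_general G I J hI hJ f hf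
end

section
/- Let G ∈ F^{k×n} generate an (r,r,d)-robust batch code, and fix i ∈ [k]. Suppose the set T_i of columns of G that are nonzero scalar multiples of the standard basis vector e_i satisfies |T_i| ≤ d. Then S_i = { j : G_{i,j} ≠ 0 } satisfies |S_i| ≥ d + 1 + (k − r). -/
/-!
Suppose `|S_i| ≤ d + (k - r)`. Erase a set `D` of `d` columns containing all of `T_i` and as
much of `S_i` as possible; at most `k - r` columns of `S_i` survive, and each of them has a
nonzero entry in some row other than `i`. Collecting one such row per surviving column gives at
most `k - r` rows, so there is a set `I ∋ i` of `r` rows avoiding them all. A recovery set `J`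
for `I` avoiding `D` has at most `|I|` columns, and by counting dimensions its columns then
vanish outside the rows of `I`, while one of them must be nonzero in row `i`. That column lies
in `S_i \ D`, hence is nonzero in a row outside `I`: a contradiction.
-/

/-- `G` generates an `(r,r,d)`-robust batch code. -/
def IsRBC (F : Type) [Field F] {k n : ℕ} (r d : ℕ) (G : Matrix (Fin k) (Fin n) F) : Prop :=
  ∀ I : Finset (Fin k), I.card = r → ∀ D : Finset (Fin n), D.card = d →
    ∃ J : Finset (Fin n), J.card ≤ r ∧ Disjoint J D ∧
      ∃ f : (↥J → F) → (↥I → F), ∀ x : Fin k → F,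
        f (fun j => Matrix.vecMul x G j.1) = fun i => x i.1

open Finset

namespace Matrix

variable {F : Type} [Field F] {ι κ : Type} [Fintype ι]

/-- Linear form of: the coordinates `J` of `x ᵥ* G` determine the coordinates `I` of `x`. -/
def Recovers (G : Matrix ι κ F) (J : Finset κ) (I : Finset ι) : Prop :=
  ∀ x : ι → F, (∀ j ∈ J, (x ᵥ* G) j = 0) → ∀ i ∈ I, x i = 0

theorem recovers_of_determines {G : Matrix ι κ F} {J : Finset κ} {I : Finset ι}
    (f : (J → F) → (I → F)) (hf : ∀ x : ι → F, f (fun j : J => (x ᵥ* G) j) = fun i : I => x i) :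
    G.Recovers J I := by
  intro x hx i hi
  have hfx : (fun j : J => (x ᵥ* G) j) = fun j : J => ((0 : ι → F) ᵥ* G) j := by
    funext j
    rw [hx j j.2, zero_vecMul, Pi.zero_apply]
  have := congrFun (hf x) ⟨i, hi⟩
  rw [hfx, hf 0] at this
  exact this.symm

theorem Recovers.exists_ne_zero [DecidableEq ι] {G : Matrix ι κ F} {J : Finset κ} {I : Finset ι}
    (h : G.Recovers J I) {i : ι} (hi : i ∈ I) : ∃ j ∈ J, G i j ≠ 0 := by
  by_contra! hzero
  have := h (Pi.single i 1) (fun j hj => by simp [hzero j hj]) i hi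
  simp at this

/-- The kernel of `x ↦ (x ᵥ* G)|_J` lies in that of `x ↦ x|_I` and, as `#J ≤ #I`, has at least
its dimension, so the two agree and contain `Pi.single i 1` for `i ∉ I`. -/
theorem Recovers.eq_zero_of_notMem [DecidableEq ι] [Fintype κ] {G : Matrix ι κ F} {J : Finset κ}
    {I : Finset ι} (h : G.Recovers J I) (hcard : #J ≤ #I) {i : ι} (hi : i ∉ I) {j : κ}
    (hj : j ∈ J) : G i j = 0 := by
  let L : (ι → F) →ₗ[F] (J → F) := (LinearMap.funLeft F F ((↑) : J → κ)).comp G.vecMulLinear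
  let P : (ι → F) →ₗ[F] (I → F) := LinearMap.funLeft F F ((↑) : I → ι)
  have hle : LinearMap.ker L ≤ LinearMap.ker P := fun x hx => by
    funext i'
    exact h x (fun j hj => congrFun (LinearMap.mem_ker.mp hx) ⟨j, hj⟩) i' i'.2
  have hrankP : Module.finrank F (LinearMap.range P) = #I := by
    rw [LinearMap.range_eq_top.mpr
      (LinearMap.funLeft_surjective_of_injective F F _ Subtype.val_injective),
      finrank_top, Module.finrank_fintype_fun_eq_card, Fintype.card_coe]
  have hrankL : Module.finrank F (LinearMap.range L) ≤ #J :=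
    (Submodule.finrank_le _).trans (by rw [Module.finrank_fintype_fun_eq_card, Fintype.card_coe])
  have hker : LinearMap.ker L = LinearMap.ker P := by
    refine Submodule.eq_of_le_of_finrank_le hle ?_
    have hL := LinearMap.finrank_range_add_finrank_ker L
    have hP := LinearMap.finrank_range_add_finrank_ker P
    omega
  have hsingle : Pi.single i (1 : F) ∈ LinearMap.ker L := by
    rw [hker, LinearMap.mem_ker]
    funext i'
    exact Pi.single_eq_of_ne (fun h : i'.1 = i => hi (h ▸ i'.2)) 1
  simpa [L, single_one_vecMul] using congrFun (LinearMap.mem_ker.mp hsingle) ⟨j, hj⟩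

end Matrix

theorem Finset.exists_superset_card_eq_card_sdiff_le {α : Type} [Fintype α] [DecidableEq α]
    {T S : Finset α} {d : ℕ} (hTS : T ⊆ S) (hT : #T ≤ d) (hd : d ≤ Fintype.card α) :
    ∃ D, T ⊆ D ∧ #D = d ∧ #(S \ D) ≤ #S - d := by
  obtain ⟨E, hTE, hES, hE⟩ :=
    exists_subsuperset_card_eq hTS (le_min hT (card_le_card hTS)) (min_le_right _ _)
  obtain ⟨D, hED, -, hD⟩ := exists_subsuperset_card_eq (subset_univ E)
    (hE.trans_le (min_le_left _ _)) (by rwa [card_univ])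
  refine ⟨D, hTE.trans hED, hD, ?_⟩
  have := card_le_card (sdiff_subset_sdiff (subset_refl S) hED)
  rw [card_sdiff_of_subset hES, hE] at this
  omega

theorem Finset.exists_card_eq_forall_exists_notMem {ι β : Type} [Fintype ι] [DecidableEq ι]
    {A : Finset β} {p : β → ι → Prop} {i : ι} (hp : ∀ b ∈ A, ∃ i' ≠ i, p b i') {r : ℕ}
    (hr : 1 ≤ r) (hA : #A + r ≤ Fintype.card ι) :
    ∃ I : Finset ι, i ∈ I ∧ #I = r ∧ ∀ b ∈ A, ∃ i' ∉ I, p b i' := by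
  choose ψ hψ using fun b : A => hp b.1 b.2
  have hiB : i ∉ univ.image ψ := by
    simp only [mem_image, mem_univ, true_and, not_exists]
    exact fun b => (hψ b).1
  have hB : #(univ.image ψ) ≤ #A := card_image_le.trans (by rw [card_univ, Fintype.card_coe])
  obtain ⟨I, hiI, hIB, hI⟩ := exists_subsuperset_card_eq
    (show {i} ⊆ univ \ univ.image ψ by simpa using hiB) (by simpa using hr)
    (by rw [card_sdiff_of_subset (subset_univ _), card_univ]; omega)
  refine ⟨I, singleton_subset_iff.mp hiI, hI, fun b hb =>
    ⟨ψ ⟨b, hb⟩, fun hmem => ?_, (hψ ⟨b, hb⟩).2⟩⟩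
  exact (mem_sdiff.mp (hIB hmem)).2 (mem_image_of_mem ψ (mem_univ _))

theorem exists_ne_ne_zero_of_ne_single {ι F : Type} [DecidableEq ι] [Zero F] {v : ι → F}
    {i : ι} (hv : v ≠ Pi.single i (v i)) : ∃ i' ≠ i, v i' ≠ 0 := by
  by_contra! h
  exact hv (funext fun i' => by
    by_cases hne : i' = i
    · simp [hne]
    · simp [hne, h i' hne])

theorem stmt_4 {F : Type} [Field F] [Fintype F] [DecidableEq F] {k n r d : ℕ}
    (hr : 1 ≤ r) (hrk : r ≤ k) (hdn : d + r ≤ n)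
    (G : Matrix (Fin k) (Fin n) F) (hG : IsRBC F r d G) (i : Fin k)
    (hT : (Finset.univ.filter (fun j : Fin n =>
        ∃ g : F, g ≠ 0 ∧ (fun i' => G i' j) = Pi.single i g)).card ≤ d) :
    d + 1 + (k - r) ≤ (Finset.univ.filter (fun j : Fin n => G i j ≠ 0)).card := by
  set S := univ.filter fun j : Fin n => G i j ≠ 0
  set T := univ.filter fun j : Fin n => ∃ g : F, g ≠ 0 ∧ (fun i' => G i' j) = Pi.single i g
  by_contra! hS
  have hTS : T ⊆ S := fun j hj => by
    obtain ⟨g, hg, hcol⟩ := (mem_filter.mp hj).2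
    simpa [S, congrFun hcol i] using hg
  obtain ⟨D, hTD, hD, hSD⟩ :=
    exists_superset_card_eq_card_sdiff_le hTS hT (by rw [Fintype.card_fin]; omega)
  have hoff : ∀ j ∈ S \ D, ∃ i' ≠ i, G i' j ≠ 0 := fun j hj =>
    exists_ne_ne_zero_of_ne_single fun hcol => (mem_sdiff.mp hj).2 <| hTD <| by
      simpa [T] using ⟨G i j, (mem_filter.mp (mem_sdiff.mp hj).1).2, hcol⟩
  obtain ⟨I, hiI, hI, hIoff⟩ :=
    exists_card_eq_forall_exists_notMem hoff hr (by rw [Fintype.card_fin]; omega)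
  obtain ⟨J, hJ, hJD, f, hf⟩ := hG I hI D hD
  have hrec := Matrix.recovers_of_determines f hf
  obtain ⟨j, hjJ, hij⟩ := hrec.exists_ne_zero hiI
  obtain ⟨i', hi'I, hi'j⟩ :=
    hIoff j (mem_sdiff.mpr ⟨by simpa [S] using hij, disjoint_left.mp hJD hjJ⟩)
  exact hi'j (hrec.eq_zero_of_notMem (hI ▸ hJ) hi'I hjJ)
end

section
/- For real numbers k ≥ r ≥ 1 and d ≥ 0, if r ≤ k + d − √((k+d)² − k²), then d(r − 1) ≤ (k − r)²/2. -/
/-- Squaring the hypothesis gives `(k + d) ^ 2 - k ^ 2 ≤ (k + d - r) ^ 2`, which expands to the claim;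
this holds even for a negative radicand, where `√` is `0`. -/
lemma two_mul_mul_le_sq_sub_of_le_add_sub_sqrt {k r d : ℝ}
    (h : r ≤ k + d - √((k + d) ^ 2 - k ^ 2)) : 2 * d * r ≤ (k - r) ^ 2 := by
  have hsq : (k + d) ^ 2 - k ^ 2 ≤ (k + d - r) ^ 2 :=
    (Real.sqrt_le_iff.mp (by linarith)).2
  linarith

theorem stmt_10_general (k r d : ℝ) (hd : 0 ≤ d)
    (hcond : r ≤ k + d - Real.sqrt ((k + d) ^ 2 - k ^ 2)) :
    d * (r - 1) ≤ (k - r) ^ 2 / 2 := by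
  calc d * (r - 1) ≤ d * r := mul_le_mul_of_nonneg_left (by linarith) hd
    _ ≤ (k - r) ^ 2 / 2 := by linarith [two_mul_mul_le_sq_sub_of_le_add_sub_sqrt hcond]

theorem stmt_10 (k r d : ℝ) (hr : 1 ≤ r) (hrk : r ≤ k) (hd : 0 ≤ d)
    (hcond : r ≤ k + d - Real.sqrt ((k + d) ^ 2 - k ^ 2)) :
    d * (r - 1) ≤ (k - r) ^ 2 / 2 :=
  stmt_10_general k r d hd hcond
end
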